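/- arXiv:2206.14656 — 2 statements merged into one kernel-verified Lean document; each statement's English description precedes it below -/
import Mathlib

section
/- Let ω_m > 0, λ > 0, and let the sampling interval satisfy 0 < T_s < π/ω_m (sampling above the Nyquist rate). If f₁ and f₂ are both ω_m-bandlimited with finite energy and M_λ(f₁(n T_s)) = M_λ(f₂(n T_s)) for every n ∈ ℤ, then f₁ = f₂ (as functions on ℝ). -/
/-- `f : ℝ → ℝ` is `ωm`-bandlimited with finite energy: there is a square-integrable
`F : ℝ → ℂ` vanishing a.e. outside `[-ωm, ωm]` with
`f t = (1/(2π)) ∫ F ω e^{iωt} dω` for all `t`. -/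
def IsBandlimited (ωm : ℝ) (f : ℝ → ℝ) : Prop :=
  ∃ F : ℝ → ℂ,
    MeasureTheory.MemLp F 2 MeasureTheory.volume ∧
    (∀ᵐ ω : ℝ ∂MeasureTheory.volume, ω ∉ Set.Icc (-ωm) ωm → F ω = 0) ∧
    ∀ t : ℝ, (f t : ℂ) =
      (1 / (2 * Real.pi)) * ∫ ω : ℝ, F ω * Complex.exp (Complex.I * ω * t)

/-- The modulo operation `M_λ(a) = ((a + λ) mod 2λ) − λ`, where `x mod 2λ` is the
unique element of `[0, 2λ)` congruent to `x` modulo `2λ`. -/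
noncomputable def modOp (lam a : ℝ) : ℝ :=
  Int.fract ((a + lam) / (2 * lam)) * (2 * lam) - lam

/-- The normalized sinc function: `sinc x = sin (π x) / (π x)` for `x ≠ 0`, `sinc 0 = 1`. -/
noncomputable def sinc (x : ℝ) : ℝ :=
  if x = 0 then 1 else Real.sin (Real.pi * x) / (Real.pi * x)

/-! Let `g = f₁ - f₂`, bandlimited with spectrum `F`. Equal folded samples force
`g (n * Ts) ∈ 2λℤ`. Since `Ts < π / ωm`, `F` lives inside one period `(-π/Ts, π/Ts]`, and
its Fourier coefficients on that period are `Ts * g (-n * Ts)`: they lie in the lattice `2λTs ℤ`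
and are square-summable (Parseval), so only finitely many are nonzero. Hence `F` agrees on the
period with a trigonometric polynomial. That polynomial vanishes on the gap `(ωm, π/Ts)` left
by the Nyquist condition, so by the identity theorem for its entire extension it vanishes
identically; thus `F = 0` and `g = 0`. -/

open MeasureTheory Set Filter Topology Complex

theorem sub_mem_zmultiples_of_modOp_eq {lam a b : ℝ} (hlam : lam ≠ 0)
    (h : modOp lam a = modOp lam b) : a - b ∈ AddSubgroup.zmultiples (2 * lam) := by
  have h2lam : 2 * lam ≠ 0 := mul_ne_zero two_ne_zero hlam
  have hfract : Int.fract ((a + lam) / (2 * lam)) = Int.fract ((b + lam) / (2 * lam)) :=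
    mul_right_cancel₀ h2lam (by unfold modOp at h; linarith)
  obtain ⟨k, hk⟩ := Int.fract_eq_fract.1 hfract
  refine AddSubgroup.mem_zmultiples_iff.2 ⟨k, ?_⟩
  rw [zsmul_eq_mul, ← hk]
  field_simp
  ring

theorem MeasureTheory.MemLp.integrable_of_ae_notMem_eq_zero {α E : Type*} [MeasurableSpace α]
    {μ : Measure α} [NormedAddCommGroup E] {p : ENNReal} {f : α → E} {s : Set α}
    (hf : MemLp f p μ) (hp : 1 ≤ p) (hs : μ s ≠ ⊤) (hsupp : ∀ᵐ x ∂μ, x ∉ s → f x = 0) :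
    Integrable f μ :=
  have := isFiniteMeasure_restrict.2 hs
  IntegrableOn.integrable_of_ae_notMem_eq_zero ((hf.restrict s).integrable hp) hsupp

theorem integrable_mul_exp_of_memLp {ωm t : ℝ} {F : ℝ → ℂ} (hF : MemLp F 2)
    (hsupp : ∀ᵐ ω, ω ∉ Icc (-ωm) ωm → F ω = 0) :
    Integrable fun ω : ℝ => F ω * exp (I * ω * t) :=
  (hF.integrable_of_ae_notMem_eq_zero one_le_two measure_Icc_lt_top.ne hsupp).mul_bdd
    (c := 1) (by fun_prop) (ae_of_all _ fun ω => by simp [norm_exp])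

theorem IsBandlimited.sub {ωm : ℝ} {f₁ f₂ : ℝ → ℝ} (hf₁ : IsBandlimited ωm f₁)
    (hf₂ : IsBandlimited ωm f₂) : IsBandlimited ωm (f₁ - f₂) := by
  obtain ⟨F₁, hF₁, hsupp₁, hrep₁⟩ := hf₁
  obtain ⟨F₂, hF₂, hsupp₂, hrep₂⟩ := hf₂
  refine ⟨F₁ - F₂, hF₁.sub hF₂, ?_, fun t => ?_⟩
  · filter_upwards [hsupp₁, hsupp₂] with ω h₁ h₂ hω
    simp [h₁ hω, h₂ hω]
  · rw [Pi.sub_apply, ofReal_sub, hrep₁, hrep₂, ← mul_sub, ← integral_sub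
      (integrable_mul_exp_of_memLp hF₁ hsupp₁) (integrable_mul_exp_of_memLp hF₂ hsupp₂)]
    simp only [Pi.sub_apply, sub_mul]

theorem Filter.Tendsto.finite_setOf_ne_zero {ι E : Type*} [NormedAddCommGroup E] {u : ι → E}
    (hu : Tendsto u cofinite (𝓝 0)) {ε : ℝ} (hε : 0 < ε) (hgap : ∀ i, u i ≠ 0 → ε ≤ ‖u i‖) :
    {i | u i ≠ 0}.Finite := by
  have hsmall : ∀ᶠ i in cofinite, ‖u i‖ < ε :=
    (tendsto_zero_iff_norm_tendsto_zero.1 hu).eventually (gt_mem_nhds hε)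
  refine eventually_cofinite.1 (hsmall.mono fun i hi => ?_)
  by_contra h
  exact (hgap i h).not_gt hi

theorem ae_eq_sum_fourier_of_fourierCoeffOn_eq_zero {a b : ℝ} (hab : a < b) {G : ℝ → ℂ}
    (hG : MemLp G 2 (volume.restrict (Ioc a b))) {s : Finset ℤ}
    (hs : ∀ n ∉ s, fourierCoeffOn hab G n = 0) :
    G =ᵐ[volume.restrict (Ioc a b)]
      fun y => ∑ n ∈ s, fourierCoeffOn hab G n • fourier n (y : AddCircle (b - a)) := by
  have : Fact (0 < b - a) := ⟨sub_pos.2 hab⟩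
  have hIoc : Ioc a b = Ioc a (a + (b - a)) := by rw [add_sub_cancel]
  rw [hIoc] at hG ⊢
  set f := AddCircle.liftIoc (b - a) a G
  set P : C(AddCircle (b - a), ℂ) := ∑ n ∈ s, fourierCoeffOn hab G n • fourier n
  have hf : MemLp f 2 AddCircle.haarAddCircle := hG.memLp_liftIoc.haarAddCircle
  have hcoeff : fourierCoeff hf.toLp = fourierCoeffOn hab G :=
    fourierCoeff_congr_ae hf.coeFn_toLp
  have hLp : hf.toLp = ContinuousMap.toLp 2 AddCircle.haarAddCircle ℂ P := by
    refine (hasSum_fourier_series_L2 hf.toLp).unique ?_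
    simp only [P, map_sum, map_smul, hcoeff]
    exact hasSum_sum_of_ne_finset_zero fun n hn => by rw [hs n hn, zero_smul]
  have hfP : f =ᵐ[volume] P := by
    rw [AddCircle.volume_eq_smul_haarAddCircle]
    refine Measure.ae_smul_measure ?_ _
    filter_upwards [hf.coeFn_toLp, ContinuousMap.coeFn_toLp (𝕜 := ℂ) (p := 2)
      AddCircle.haarAddCircle P] with x hfx hPx
    rw [← hfx, hLp, hPx]
  filter_upwards [(AddCircle.measurePreserving_mk (b - a) a).quasiMeasurePreserving.ae_eq_comp hfP,
    ae_restrict_mem measurableSet_Ioc] with y hy hmem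
  simpa [f, P, AddCircle.liftIoc_coe_apply hmem] using hy

theorem sum_fourier_eq_zero_of_eqOn_Ioo {T u v : ℝ} (huv : u < v) (s : Finset ℤ) (c : ℤ → ℂ)
    (h : ∀ y ∈ Ioo u v, ∑ n ∈ s, c n • fourier n (y : AddCircle T) = 0) (y : ℝ) :
    ∑ n ∈ s, c n • fourier n (y : AddCircle T) = 0 := by
  set Q : ℂ → ℂ := fun z => ∑ n ∈ s, c n • exp (2 * Real.pi * I * n * z / T)
  have hQ (y : ℝ) : Q y = ∑ n ∈ s, c n • fourier n (y : AddCircle T) := by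
    simp only [Q, fourier_coe_apply]
  have hQan : AnalyticOnNhd ℂ Q univ :=
    DifferentiableOn.analyticOnNhd (by fun_prop) isOpen_univ
  obtain ⟨y₀, hy₀⟩ := nonempty_Ioo.2 huv
  have hfreq : ∃ᶠ z in 𝓝[≠] (y₀ : ℂ), Q z = 0 := by
    have hev : ∀ᶠ y : ℝ in 𝓝[≠] y₀, Q y = 0 :=
      eventually_nhdsWithin_of_eventually_nhds <|
        (isOpen_Ioo.eventually_mem hy₀).mono fun y hy => (hQ y).trans (h y hy)
    have hmap : Tendsto ((↑) : ℝ → ℂ) (𝓝[≠] y₀) (𝓝[≠] (y₀ : ℂ)) :=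
      continuous_ofReal.continuousWithinAt.tendsto_nhdsWithin fun y hy => by simpa using hy
    exact hmap.frequently (p := fun z => Q z = 0) hev.frequently
  rw [← hQ]
  exact hQan.eqOn_zero_of_preconnected_of_frequently_eq_zero isPreconnected_univ (mem_univ _)
    hfreq (mem_univ _)

theorem ae_eq_zero_of_fourierCoeffOn_gap {a b u v : ℝ} (hab : a < b) (huv : u < v)
    (hsub : Ioo u v ⊆ Ioc a b) {G : ℝ → ℂ} (hG : MemLp G 2 (volume.restrict (Ioc a b)))
    (hvanish : G =ᵐ[volume.restrict (Ioo u v)] 0) {ε : ℝ} (hε : 0 < ε)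
    (hgap : ∀ n, fourierCoeffOn hab G n ≠ 0 → ε ≤ ‖fourierCoeffOn hab G n‖) :
    G =ᵐ[volume.restrict (Ioc a b)] 0 := by
  have hfin : {n | fourierCoeffOn hab G n ≠ 0}.Finite := by
    have hsq := (hasSum_sq_fourierCoeffOn hab hG).summable.tendsto_cofinite_zero
    simpa using hsq.finite_setOf_ne_zero (pow_pos hε 2) fun n hn => by
      rw [Real.norm_of_nonneg (by positivity)]
      exact pow_le_pow_left₀ hε.le (hgap n (by simpa using hn)) 2
  set Q : ℝ → ℂ := fun y =>
    ∑ n ∈ hfin.toFinset, fourierCoeffOn hab G n • fourier n (y : AddCircle (b - a))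
  have hGQ : G =ᵐ[volume.restrict (Ioc a b)] Q :=
    ae_eq_sum_fourier_of_fourierCoeffOn_eq_zero hab hG fun n hn => by simpa using hn
  have hQ : Continuous Q := by
    simp only [Q]
    fun_prop
  have hGQ_Ioo : G =ᵐ[volume.restrict (Ioo u v)] Q := ae_restrict_of_ae_restrict_of_subset hsub hGQ
  have hQ_Ioo : EqOn Q 0 (Ioo u v) :=
    Measure.eqOn_open_of_ae_eq (hGQ_Ioo.symm.trans hvanish) isOpen_Ioo hQ.continuousOn
      continuousOn_const
  have hQ_zero : Q = 0 := funext <| sum_fourier_eq_zero_of_eqOn_Ioo huv _ _ hQ_Ioo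
  simpa [hQ_zero] using hGQ

theorem fourierCoeffOn_eq_integral_mul_exp {Ts : ℝ} (hTs : 0 < Ts)
    (hab : -(Real.pi / Ts) < Real.pi / Ts) {F : ℝ → ℂ}
    (hsupp : ∀ᵐ ω, ω ∉ Ioc (-(Real.pi / Ts)) (Real.pi / Ts) → F ω = 0) (n : ℤ) :
    fourierCoeffOn hab F n =
      Ts / (2 * Real.pi) * ∫ ω : ℝ, F ω * exp (I * ω * (-n * Ts : ℝ)) := by
  have hπ : (Real.pi : ℂ) ≠ 0 := ofReal_ne_zero.2 Real.pi_ne_zero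
  have hTs' : (Ts : ℂ) ≠ 0 := ofReal_ne_zero.2 hTs.ne'
  have hIoc : ∫ ω : ℝ, F ω * exp (I * ω * (-n * Ts : ℝ)) =
      ∫ ω in Ioc (-(Real.pi / Ts)) (Real.pi / Ts), F ω * exp (I * ω * (-n * Ts : ℝ)) := by
    refine (setIntegral_eq_integral_of_ae_compl_eq_zero ?_).symm
    filter_upwards [hsupp] with ω hω hω'
    rw [hω hω', zero_mul]
  rw [fourierCoeffOn_eq_integral, intervalIntegral.integral_of_le hab.le, hIoc, real_smul]
  congr 1
  · push_cast; field_simp; ring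
  · refine setIntegral_congr_fun measurableSet_Ioc fun ω _ => ?_
    rw [fourier_coe_apply, smul_eq_mul, mul_comm]
    congr 2
    push_cast
    field_simp
    ring

theorem IsBandlimited.eq_zero_of_forall_mem_zmultiples {ωm Ts c : ℝ} {g : ℝ → ℝ}
    (hg : IsBandlimited ωm g) (hTs : 0 < Ts) (hNyq : ωm < Real.pi / Ts) (hc : c ≠ 0)
    (hsamp : ∀ n : ℤ, g (n * Ts) ∈ AddSubgroup.zmultiples c) : g = 0 := by
  obtain ⟨F, hF, hsupp, hrep⟩ := hg
  set b := Real.pi / Ts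
  have hb : 0 < b := div_pos Real.pi_pos hTs
  have hab : -b < b := neg_lt_self hb
  have hsupp_Ioc : ∀ᵐ ω, ω ∉ Ioc (-b) b → F ω = 0 :=
    hsupp.mono fun ω h hω => h fun hI => hω ⟨by linarith [hI.1], by linarith [hI.2]⟩
  have hcoeff (n : ℤ) : fourierCoeffOn hab F n = Ts * g (-n * Ts) := by
    rw [fourierCoeffOn_eq_integral_mul_exp hTs hab hsupp_Ioc, hrep]
    ring
  have hgap (n : ℤ) (hn : fourierCoeffOn hab F n ≠ 0) :
      Ts * |c| ≤ ‖fourierCoeffOn hab F n‖ := by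
    obtain ⟨k, hk⟩ := AddSubgroup.mem_zmultiples_iff.1 (hsamp (-n))
    rw [Int.cast_neg] at hk
    rw [hcoeff, ← hk] at hn ⊢
    have hk0 : k ≠ 0 := by rintro rfl; simp at hn
    rw [zsmul_eq_mul, ← ofReal_mul, norm_real, norm_mul, Real.norm_of_nonneg hTs.le,
      Real.norm_eq_abs, abs_mul]
    gcongr
    exact le_mul_of_one_le_left (abs_nonneg c) (by exact_mod_cast Int.one_le_abs hk0)
  have hvanish : F =ᵐ[volume.restrict (Ioo (max ωm 0) b)] 0 :=
    (ae_restrict_iff' measurableSet_Ioo).2 <| hsupp.mono fun ω h hω =>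
      h fun hI => (max_lt_iff.1 hω.1).1.not_ge hI.2
  have hF_Ioc : F =ᵐ[volume.restrict (Ioc (-b) b)] 0 :=
    ae_eq_zero_of_fourierCoeffOn_gap hab (max_lt hNyq hb)
      (Ioo_subset_Ioc_self.trans (Ioc_subset_Ioc_left (by linarith [le_max_right ωm 0])))
      (hF.restrict _) hvanish (mul_pos hTs (abs_pos.2 hc)) hgap
  have hF0 : F =ᵐ[volume] 0 := by
    filter_upwards [(ae_restrict_iff' measurableSet_Ioc).1 hF_Ioc, hsupp_Ioc] with ω h₁ h₂
    by_cases hω : ω ∈ Ioc (-b) b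
    exacts [h₁ hω, h₂ hω]
  funext t
  have hzero : ∫ ω, F ω * exp (I * ω * t) = 0 :=
    integral_eq_zero_of_ae (hF0.mono fun ω h => by simp [h])
  have hgt : (g t : ℂ) = 0 := (hrep t).trans (by rw [hzero, mul_zero])
  exact_mod_cast hgt

theorem uniqueness_above_nyquist_modulo
    (ωm lam Ts : ℝ) (hωm : 0 < ωm) (hlam : 0 < lam)
    (hTs : 0 < Ts) (hNyq : Ts < Real.pi / ωm)
    (f₁ f₂ : ℝ → ℝ)
    (hf₁ : IsBandlimited ωm f₁) (hf₂ : IsBandlimited ωm f₂)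
    (hsamp : ∀ n : ℤ, modOp lam (f₁ (n * Ts)) = modOp lam (f₂ (n * Ts))) :
    f₁ = f₂ := by
  have hωm_lt : ωm < Real.pi / Ts := by
    rwa [lt_div_iff₀ hTs, mul_comm, ← lt_div_iff₀ hωm]
  refine sub_eq_zero.1 <| (hf₁.sub hf₂).eq_zero_of_forall_mem_zmultiples hTs hωm_lt
    (mul_ne_zero two_ne_zero hlam.ne') fun n => ?_
  exact sub_mem_zmultiples_of_modOp_eq hlam.ne' (hsamp n)
end

section
/- Let ω_m > 0, 0 < T_s < π/ω_m, and λ > 0. Let f be ω_m-bandlimited with finite energy whose samples are absolutely summable (Σ_{n∈ℤ} |f(n T_s)| < ∞). Define the residual sequence z(n) = M_λ(f(n T_s)) − f(n T_s), and suppose there is N ∈ ℕ with z(n) = 0 for all |n| > N. Then for every real ω with ω_m < |ω| < π/T_s, Σ_{n∈ℤ} M_λ(f(n T_s)) e^{-i n T_s ω} = Σ_{n=-N}^{N} z(n) e^{-i n T_s ω} (both series being absolutely convergent). -/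
/-! The spectrum `F` is supported in `[-ω_m, ω_m] ⊆ (-π/T_s, π/T_s]`, so it lifts to a function on
the circle `ℝ ⧸ (2π/T_s)ℤ` whose `n`-th Fourier coefficient is `T_s f(-n T_s)`. As the samples are
absolutely summable, the Fourier series converges uniformly to a continuous function equal a.e.
to the lifted spectrum, hence vanishing on the open out-of-band set `ω_m < |ω| < π/T_s`; its value
at `ω` is `T_s` times the DTFT of the samples. Finally `M_λ(f(nT_s)) = f(nT_s) + z(n)` with `z`
finitely supported. -/

open MeasureTheory Set Filter AddCircle Complex
open scoped Real

section Circle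

variable {T : ℝ} [Fact (0 < T)]

theorem exists_hasSum_fourier_ae_eq_of_summable_norm_fourierCoeff {H : AddCircle T → ℂ}
    (hH : MemLp H 2 haarAddCircle) (hs : Summable fun n => ‖fourierCoeff H n‖) :
    ∃ g : C(AddCircle T, ℂ),
      HasSum (fun n => fourierCoeff H n • fourier n) g ∧ ⇑g =ᵐ[haarAddCircle] H := by
  have hsum : Summable fun n => fourierCoeff H n • fourier (T := T) n :=
    .of_norm (by simpa only [norm_smul, fourier_norm, mul_one] using hs)
  obtain ⟨g, hg⟩ := hsum
  refine ⟨g, hg, ?_⟩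
  have hL2 := hasSum_fourier_series_L2 (hH.toLp H)
  simp_rw [fourierCoeff_congr_ae hH.coeFn_toLp] at hL2
  have hLp := (ContinuousMap.toLp (E := ℂ) 2 haarAddCircle ℂ).hasSum hg
  simp_rw [map_smul] at hLp
  have hgH := hLp.unique hL2
  filter_upwards [ContinuousMap.coeFn_toLp (p := 2) (𝕜 := ℂ) haarAddCircle g, hH.coeFn_toLp]
    with x hgx hHx
  rw [← hgx, hgH, hHx]

theorem ae_restrict_Ioc_eq_of_ae_eq_liftIoc {a : ℝ} {g : AddCircle T → ℂ} {F : ℝ → ℂ}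
    (h : g =ᵐ[haarAddCircle] liftIoc T a F) :
    (fun x : ℝ => g x) =ᵐ[volume.restrict (Ioc a (a + T))] F := by
  have hvol : g =ᵐ[volume] liftIoc T a F := by
    rw [volume_eq_smul_haarAddCircle]
    exact Measure.ae_smul_measure h _
  filter_upwards [(AddCircle.measurePreserving_mk T a).quasiMeasurePreserving.ae_eq_comp hvol,
    ae_restrict_mem measurableSet_Ioc] with x hx hmem
  exact hx.trans (liftIoc_coe_apply hmem)

theorem fourierCoeff_liftIoc_eq_integral {a : ℝ} {F : ℝ → ℂ}
    (hF : ∀ᵐ x, x ∉ Ioc a (a + T) → F x = 0) (n : ℤ) :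
    fourierCoeff (liftIoc T a F) n = T⁻¹ • ∫ x : ℝ, fourier (-n) (x : AddCircle T) • F x := by
  rw [fourierCoeff_liftIoc_eq, fourierCoeffOn_eq_integral, add_sub_cancel_left, one_div,
    intervalIntegral.integral_of_le (lt_add_of_pos_right a Fact.out).le]
  congr 1
  refine setIntegral_eq_integral_of_ae_compl_eq_zero ?_
  filter_upwards [hF] with x hx hxc
  rw [hx hxc, smul_zero]

theorem ContinuousMap.eqOn_zero_of_ae_eq_liftIoc {a : ℝ} {g : C(AddCircle T, ℂ)} {F : ℝ → ℂ}
    (hg : g =ᵐ[haarAddCircle] liftIoc T a F) {U : Set ℝ} (hU : IsOpen U)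
    (hUa : U ⊆ Ioc a (a + T)) (hF : ∀ᵐ x, x ∈ U → F x = 0) :
    EqOn (fun x : ℝ => g x) 0 U := by
  refine Measure.eqOn_open_of_ae_eq (μ := volume) ?_ hU
    (g.continuous.comp (continuous_quotient_mk')).continuousOn continuousOn_const
  filter_upwards [ae_restrict_of_ae_restrict_of_subset hUa (ae_restrict_Ioc_eq_of_ae_eq_liftIoc hg),
    ae_restrict_of_ae hF, ae_restrict_mem hU.measurableSet] with x hgx hFx hx
  rw [hgx, hFx hx, Pi.zero_apply]

end Circle

theorem fourier_coe_apply_two_pi_div {Ts : ℝ} (n : ℤ) (x : ℝ) :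
    fourier n (x : AddCircle (2 * π / Ts)) = exp (I * n * Ts * x) := by
  rw [fourier_coe_apply]
  congr 1
  push_cast
  field_simp

theorem fourierCoeff_liftIoc_eq_mul_sample {ωm Ts : ℝ} [Fact (0 < 2 * π / Ts)]
    {F : ℝ → ℂ} {f : ℝ → ℝ} (hF : ∀ᵐ ω, ω ∉ Icc (-ωm) ωm → F ω = 0) (hωm : ωm < π / Ts)
    (hrep : ∀ t : ℝ, (f t : ℂ) = (1 / (2 * π)) * ∫ ω : ℝ, F ω * exp (I * ω * t)) (n : ℤ) :
    fourierCoeff (liftIoc (2 * π / Ts) (-(π / Ts)) F) n = Ts * f (-n * Ts) := by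
  have hIcc : Icc (-ωm) ωm ⊆ Ioc (-(π / Ts)) (-(π / Ts) + 2 * π / Ts) := by
    rw [show -(π / Ts) + 2 * π / Ts = π / Ts by ring]
    exact Icc_subset_Ioc (neg_lt_neg hωm) hωm.le
  rw [fourierCoeff_liftIoc_eq_integral (hF.mono fun x hx hx' => hx (fun h => hx' (hIcc h)))]
  simp_rw [fourier_coe_apply_two_pi_div, smul_eq_mul, mul_comm (exp _)]
  have hexp : ∀ x : ℝ, I * ((-n : ℤ) : ℂ) * Ts * x = I * x * ((-n * Ts : ℝ) : ℂ) := fun x => by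
    push_cast; ring
  simp_rw [hexp]
  rw [hrep, real_smul, ← mul_assoc (Ts : ℂ)]
  congr 1
  push_cast
  field_simp

theorem IsBandlimited.hasSum_dtft_eq_zero {ωm Ts : ℝ} {f : ℝ → ℝ} (hf : IsBandlimited ωm f)
    (hTs : 0 < Ts) (hsum : Summable fun n : ℤ => |f (n * Ts)|) {ω : ℝ} (hω : ωm < |ω|)
    (hωTs : |ω| < π / Ts) :
    HasSum (fun n : ℤ => (f (n * Ts) : ℂ) * exp (-I * n * Ts * ω)) 0 := by
  obtain ⟨F, hF2, hFsupp, hrep⟩ := hf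
  have : Fact (0 < 2 * π / Ts) := ⟨by positivity⟩
  set H := liftIoc (2 * π / Ts) (-(π / Ts)) F
  have hcoeff : ∀ n, fourierCoeff H n = Ts * f (-n * Ts) :=
    fourierCoeff_liftIoc_eq_mul_sample hFsupp (hω.trans hωTs) hrep
  have hH : MemLp H 2 haarAddCircle := (hF2.restrict _).memLp_liftIoc.haarAddCircle
  have hs : Summable fun n => ‖fourierCoeff H n‖ := by
    simp_rw [hcoeff, norm_mul, norm_real, Real.norm_eq_abs, abs_of_pos hTs]
    simpa [Function.comp_def] using (hsum.comp_injective neg_injective).mul_left Ts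
  obtain ⟨g, hgsum, hgH⟩ := exists_hasSum_fourier_ae_eq_of_summable_norm_fourierCoeff hH hs
  have hgω : g ω = 0 := by
    refine g.eqOn_zero_of_ae_eq_liftIoc hgH (isOpen_Ioo.preimage continuous_abs) ?_ ?_
      (show ω ∈ abs ⁻¹' Ioo ωm (π / Ts) from ⟨hω, hωTs⟩)
    · rw [show -(π / Ts) + 2 * π / Ts = π / Ts by ring]
      exact fun x hx => Ioo_subset_Ioc_self (abs_lt.mp hx.2)
    · filter_upwards [hFsupp] with x hx hxU
      exact hx fun hx' => hxU.1.not_ge (abs_le.mpr hx')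
  have hval := (ContinuousMap.evalCLM ℂ (ω : AddCircle (2 * π / Ts))).hasSum hgsum
  simp only [ContinuousMap.evalCLM_apply, ContinuousMap.smul_apply, hcoeff,
    fourier_coe_apply_two_pi_div, hgω, smul_eq_mul] at hval
  have hterm : ∀ n : ℤ, (Ts : ℂ)⁻¹ * (Ts * f (-n * Ts) * exp (I * n * Ts * ω)) =
      (f ((-n : ℤ) * Ts) : ℂ) * exp (-I * (-n : ℤ) * Ts * ω) := fun n => by
    rw [← mul_assoc, ← mul_assoc, inv_mul_cancel₀ (by exact_mod_cast hTs.ne'), one_mul]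
    push_cast
    ring_nf
  have hneg := hval.mul_left (Ts : ℂ)⁻¹
  simp only [hterm, mul_zero] at hneg
  exact (Equiv.neg ℤ).hasSum_iff.mp hneg

theorem dtft_modulo_samples_eq_residual_poly_general
    (ωm Ts lam : ℝ) (hTs : 0 < Ts)
    (f : ℝ → ℝ) (hf : IsBandlimited ωm f)
    (hsum : Summable (fun n : ℤ => |f (n * Ts)|))
    (z : ℤ → ℝ) (hz : ∀ n : ℤ, z n = modOp lam (f (n * Ts)) - f (n * Ts))
    (N : ℕ) (hsupp : ∀ n : ℤ, (N : ℤ) < |n| → z n = 0) :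
    ∀ ω : ℝ, ωm < |ω| → |ω| < Real.pi / Ts →
      Summable (fun n : ℤ => ‖(modOp lam (f (n * Ts)) : ℂ) *
        Complex.exp (-Complex.I * (n : ℂ) * (Ts : ℂ) * (ω : ℂ))‖) ∧
      ∑' n : ℤ, (modOp lam (f (n * Ts)) : ℂ) *
          Complex.exp (-Complex.I * (n : ℂ) * (Ts : ℂ) * (ω : ℂ)) =
        ∑ n ∈ Finset.Icc (-(N : ℤ)) (N : ℤ),
          (z n : ℂ) * Complex.exp (-Complex.I * (n : ℂ) * (Ts : ℂ) * (ω : ℂ)) := by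
  intro ω hω hωTs
  have hmod : ∀ n : ℤ, modOp lam (f (n * Ts)) = f (n * Ts) + z n := fun n => by
    rw [hz]
    ring
  have hzN : ∀ n ∉ Finset.Icc (-(N : ℤ)) N, z n = 0 := fun n hn =>
    hsupp n (not_le.mp fun h => hn (Finset.mem_Icc.mpr (abs_le.mp h)))
  have hres : HasSum (fun n : ℤ => (z n : ℂ) * exp (-I * n * Ts * ω))
      (∑ n ∈ Finset.Icc (-(N : ℤ)) N, (z n : ℂ) * exp (-I * n * Ts * ω)) :=
    hasSum_sum_of_ne_finset_zero fun n hn => by rw [hzN n hn, ofReal_zero, zero_mul]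
  have hdtft := (hf.hasSum_dtft_eq_zero hTs hsum hω hωTs).add hres
  simp only [zero_add, ← add_mul, ← ofReal_add, ← hmod] at hdtft
  refine ⟨?_, hdtft.tsum_eq⟩
  have hzsum : Summable fun n => |z n| := summable_of_ne_finset_zero fun n hn => by
    rw [hzN n hn, abs_zero]
  refine (hsum.add hzsum).of_nonneg_of_le (fun n => norm_nonneg _) fun n => ?_
  rw [norm_mul, show ‖exp (-I * n * Ts * ω)‖ = 1 by simp [norm_exp], mul_one, norm_real,
    Real.norm_eq_abs, hmod]
  exact abs_add_le _ _

theorem dtft_modulo_samples_eq_residual_poly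
    (ωm Ts lam : ℝ) (hωm : 0 < ωm) (hTs : 0 < Ts) (hNyq : Ts < Real.pi / ωm)
    (hlam : 0 < lam)
    (f : ℝ → ℝ) (hf : IsBandlimited ωm f)
    (hsum : Summable (fun n : ℤ => |f (n * Ts)|))
    (z : ℤ → ℝ) (hz : ∀ n : ℤ, z n = modOp lam (f (n * Ts)) - f (n * Ts))
    (N : ℕ) (hsupp : ∀ n : ℤ, (N : ℤ) < |n| → z n = 0) :
    ∀ ω : ℝ, ωm < |ω| → |ω| < Real.pi / Ts →
      Summable (fun n : ℤ => ‖(modOp lam (f (n * Ts)) : ℂ) *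
        Complex.exp (-Complex.I * (n : ℂ) * (Ts : ℂ) * (ω : ℂ))‖) ∧
      ∑' n : ℤ, (modOp lam (f (n * Ts)) : ℂ) *
          Complex.exp (-Complex.I * (n : ℂ) * (Ts : ℂ) * (ω : ℂ)) =
        ∑ n ∈ Finset.Icc (-(N : ℤ)) (N : ℤ),
          (z n : ℂ) * Complex.exp (-Complex.I * (n : ℂ) * (Ts : ℂ) * (ω : ℂ)) :=
  dtft_modulo_samples_eq_residual_poly_general ωm Ts lam hTs f hf hsum z hz N hsupp
end
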